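/- Let β > 1 and k ∈ ℕ. The prefix ε*(1,β)|_k of the modified β-expansion of 1 is full if and only if ε(1,β) is finite with length M and M divides k. -/

import Mathlib

noncomputable def Tb (β x : ℝ) : ℝ := β * x - ⌊β * x⌋

/-- The (i+1)-th digit of the β-expansion of x (0-indexed). -/
noncomputable def dig (β x : ℝ) (i : ℕ) : ℕ := (⌊β * (Tb β)^[i] x⌋).toNat

/-- w is an admissible word for base β. -/
def Adm (β : ℝ) (w : List ℕ) : Prop :=
  ∃ x, x ∈ Set.Ico (0:ℝ) 1 ∧ ∀ i (h : i < w.length), w[i] = dig β x i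

/-- u is an admissible digit sequence for base β. -/
def AdmSeq (β : ℝ) (u : ℕ → ℕ) : Prop :=
  ∃ x, x ∈ Set.Ico (0:ℝ) 1 ∧ ∀ i, u i = dig β x i

/-- The cylinder I(w) ⊆ [0,1). -/
def cyl (β : ℝ) (w : List ℕ) : Set ℝ :=
  {x | x ∈ Set.Ico (0:ℝ) 1 ∧ ∀ i (h : i < w.length), w[i] = dig β x i}

/-- w is a full word: T_β^{|w|} maps I(w) onto [0,1). -/
def Full (β : ℝ) (w : List ℕ) : Prop :=
  (Tb β)^[w.length] '' cyl β w = Set.Ico 0 1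

/-- The β-expansion of 1 is finite with length M. -/
def FiniteLen (β : ℝ) (M : ℕ) : Prop :=
  0 < M ∧ dig β 1 (M-1) ≠ 0 ∧ ∀ j, M ≤ j → dig β 1 j = 0

open Classical in
/-- The (i+1)-th digit of the modified β-expansion ε*(1,β) (0-indexed). -/
noncomputable def modExp (β : ℝ) (i : ℕ) : ℕ :=
  if h : ∃ M, FiniteLen β M then
    (if (i+1) % (Nat.find h) = 0 then dig β 1 (Nat.find h - 1) - 1
     else dig β 1 (i % Nat.find h))
  else dig β 1 i

/-- View a finite word as the sequence w0^∞. -/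
def wordSeq (w : List ℕ) (i : ℕ) : ℕ := w.getD i 0

/-- Strict lexicographic order on sequences. -/
def seqLt (u v : ℕ → ℕ) : Prop := ∃ k, (∀ i, i < k → u i = v i) ∧ u k < v k

/-- Strict lexicographic order on finite words (identified with w0^∞). -/
def wlt (u v : List ℕ) : Prop := seqLt (wordSeq u) (wordSeq v)

/-- Concatenation of a finite word with a sequence. -/
def catSeq (w : List ℕ) (u : ℕ → ℕ) (i : ℕ) : ℕ :=
  if h : i < w.length then w[i] else u (i - w.length)

open Classical in
/-- The largest position k ≤ s with ε_k ≠ 0 (greedy step). -/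
noncomputable def greedyStep (β : ℝ) (s : ℕ) : ℕ :=
  Nat.findGreatest (fun k => 1 ≤ k ∧ dig β 1 (k-1) ≠ 0) s

/-- τ_β(s): number of terms in the greedy representation of s by nonzero positions. -/
noncomputable def tau (β : ℝ) : ℕ → ℕ
  | 0 => 0
  | s + 1 => tau β (s - (greedyStep β (s+1) - 1)) + 1
decreasing_by omega

open Classical in
/-- r_s(β): maximal length of a string of 0's in ε₁*⋯ε_s*. -/
noncomputable def rrun (β : ℝ) (s : ℕ) : ℕ :=
  Nat.findGreatest (fun k => 1 ≤ k ∧ ∃ i, i + k ≤ s ∧ ∀ t, t < k → modExp β (i + t) = 0) s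

/-- v is the immediate successor of u in the lexicographic order on Σ_β^n. -/
def SuccIn (β : ℝ) (n : ℕ) (u v : List ℕ) : Prop :=
  u.length = n ∧ v.length = n ∧ Adm β u ∧ Adm β v ∧ wlt u v ∧
  ¬ ∃ z : List ℕ, z.length = n ∧ Adm β z ∧ wlt u z ∧ wlt z v

/-- There is a run of l consecutive non-full words in Σ_β^n. -/
def NonFullRun (β : ℝ) (n l : ℕ) : Prop :=
  ∃ f : ℕ → List ℕ,
    (∀ j, j < l → (f j).length = n ∧ Adm β (f j) ∧ ¬ Full β (f j)) ∧
    (∀ j, j + 1 < l → SuccIn β n (f j) (f (j+1)))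

/-- There is a maximal run of l consecutive non-full words in Σ_β^n. -/
def MaxNonFullRun (β : ℝ) (n l : ℕ) : Prop :=
  0 < l ∧ ∃ f : ℕ → List ℕ,
    (∀ j, j < l → (f j).length = n ∧ Adm β (f j) ∧ ¬ Full β (f j)) ∧
    (∀ j, j + 1 < l → SuccIn β n (f j) (f (j+1))) ∧
    (∀ u, SuccIn β n u (f 0) → Full β u) ∧
    (∀ u, SuccIn β n (f (l-1)) u → Full β u)

/-- There is a maximal run of l consecutive full words in Σ_β^n. -/
def MaxFullRun (β : ℝ) (n l : ℕ) : Prop :=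
  0 < l ∧ ∃ f : ℕ → List ℕ,
    (∀ j, j < l → (f j).length = n ∧ Adm β (f j) ∧ Full β (f j)) ∧
    (∀ j, j + 1 < l → SuccIn β n (f j) (f (j+1))) ∧
    (∀ u, SuccIn β n u (f 0) → ¬ Full β u) ∧
    (∀ u, SuccIn β n (f (l-1)) u → ¬ Full β u)

/-- The canonical decomposition of an admissible word, as in the structure theorem:
p.1 is the list of block lengths k₁,…,k_p and p.2 is the final length l. -/
def Decomp (β : ℝ) (w : List ℕ) (p : List ℕ × ℕ) : Prop :=
  1 ≤ p.2 ∧ (∀ k ∈ p.1, 1 ≤ k) ∧ p.1.sum + p.2 = w.length ∧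
  (∀ j, j < p.1.length →
    (∀ t, t < p.1.getD j 0 - 1 → w.getD ((p.1.take j).sum + t) 0 = dig β 1 t) ∧
    w.getD ((p.1.take j).sum + (p.1.getD j 0 - 1)) 0 < dig β 1 (p.1.getD j 0 - 1)) ∧
  (∀ t, t < p.2 - 1 → w.getD (p.1.sum + t) 0 = dig β 1 t) ∧
  w.getD (p.1.sum + (p.2 - 1)) 0 ≤ dig β 1 (p.2 - 1)


/-!
For `x ∈ I(w)` with `|w| = n` one has `T^n x = β^n (x - ∑ wᵢ β^{-(i+1)})`, so `T^n (I(w))`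
lies in `[0, β^n (1 - ∑ wᵢ β^{-(i+1)}))`. For `w = ε*(1,β)|_k` this bound is `T^{k mod M}(1)`
when `ε(1,β)` is finite of length `M`, and `T^k(1)` otherwise; it is `< 1` unless `M ∣ k`.
When `M ∣ k` the bound is `1`, and `y ∈ [0,1)` is the image of `∑ wᵢ β^{-(i+1)} + β^{-k} y`:
that this point lies in `I(w)` comes from `β^{M-t} T^t(1) ≥ 1` for `t < M`, a consequence
of `ε_M ≥ 1`.
-/

open Finset

section BetaExpansion

variable {β : ℝ}

lemma Tb_mem_Ico (x : ℝ) : Tb β x ∈ Set.Ico (0 : ℝ) 1 :=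
  ⟨Int.fract_nonneg (β * x), Int.fract_lt_one (β * x)⟩

lemma Tb_iterate_mem_Ico_of_ne_zero (x : ℝ) {n : ℕ} (hn : n ≠ 0) :
    (Tb β)^[n] x ∈ Set.Ico (0 : ℝ) 1 := by
  obtain ⟨m, rfl⟩ := Nat.exists_eq_succ_of_ne_zero hn
  rw [Function.iterate_succ_apply']
  exact Tb_mem_Ico _

lemma Tb_iterate_mem_Ico {x : ℝ} (hx : x ∈ Set.Ico (0 : ℝ) 1) (n : ℕ) :
    (Tb β)^[n] x ∈ Set.Ico (0 : ℝ) 1 := by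
  rcases eq_or_ne n 0 with rfl | hn
  · exact hx
  · exact Tb_iterate_mem_Ico_of_ne_zero x hn

lemma Tb_iterate_nonneg {x : ℝ} (hx : 0 ≤ x) (n : ℕ) : 0 ≤ (Tb β)^[n] x := by
  rcases eq_or_ne n 0 with rfl | hn
  · exact hx
  · exact (Tb_iterate_mem_Ico_of_ne_zero x hn).1

lemma Tb_iterate_one_le_one (n : ℕ) : (Tb β)^[n] 1 ≤ 1 := by
  rcases eq_or_ne n 0 with rfl | hn
  · exact le_rfl
  · exact (Tb_iterate_mem_Ico_of_ne_zero 1 hn).2.le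

lemma dig_eq_sub (hβ : 0 ≤ β) {x : ℝ} (hx : 0 ≤ x) (i : ℕ) :
    (dig β x i : ℝ) = β * (Tb β)^[i] x - (Tb β)^[i + 1] x := by
  have h : (0 : ℤ) ≤ ⌊β * (Tb β)^[i] x⌋ :=
    Int.floor_nonneg.2 (mul_nonneg hβ (Tb_iterate_nonneg hx i))
  rw [dig, ← Int.cast_natCast, Int.toNat_of_nonneg h, Function.iterate_succ_apply', Tb]
  ring

lemma dig_eq_of_mem_Ico {x : ℝ} {i n : ℕ} (h : β * (Tb β)^[i] x - n ∈ Set.Ico (0 : ℝ) 1) :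
    dig β x i = n := by
  have hfloor : ⌊β * (Tb β)^[i] x⌋ = n :=
    Int.floor_eq_iff.2 ⟨by push_cast; linarith [h.1], by push_cast; linarith [h.2]⟩
  rw [dig, hfloor, Int.toNat_natCast]

lemma Tb_iterate_add_le (hβ : 0 ≤ β) {x : ℝ} (hx : 0 ≤ x) (s u : ℕ) :
    (Tb β)^[s + u] x ≤ β ^ u * (Tb β)^[s] x := by
  induction u with
  | zero => simp
  | succ u ih =>
    calc (Tb β)^[s + (u + 1)] x = β * (Tb β)^[s + u] x - dig β x (s + u) := by
          rw [dig_eq_sub hβ hx, ← add_assoc]; ring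
      _ ≤ β * (β ^ u * (Tb β)^[s] x) :=
          (sub_le_self _ (Nat.cast_nonneg _)).trans (mul_le_mul_of_nonneg_left ih hβ)
      _ = β ^ (u + 1) * (Tb β)^[s] x := by ring

noncomputable def digitSum (β : ℝ) (u : ℕ → ℕ) (n : ℕ) : ℝ :=
  ∑ i ∈ range n, (u i : ℝ) * β⁻¹ ^ (i + 1)

lemma digitSum_congr {u v : ℕ → ℕ} {n : ℕ} (h : ∀ i < n, u i = v i) :
    digitSum β u n = digitSum β v n :=
  sum_congr rfl fun i hi => by rw [h i (mem_range.1 hi)]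

lemma digitSum_wordSeq_ofFn (u : ℕ → ℕ) {k m : ℕ} (hm : m ≤ k) :
    digitSum β (wordSeq (List.ofFn fun i : Fin k => u i)) m = digitSum β u m :=
  digitSum_congr fun i hi => by
    rw [wordSeq, List.getD_eq_getElem _ _ (by simp; omega), List.getElem_ofFn]

lemma pow_mul_sub_digitSum_succ (hβ : β ≠ 0) (u : ℕ → ℕ) (x : ℝ) (n : ℕ) :
    β ^ (n + 1) * (x - digitSum β u (n + 1)) = β * (β ^ n * (x - digitSum β u n)) - u n := by
  have h : β ^ (n + 1) * β⁻¹ ^ (n + 1) = 1 := by rw [← mul_pow, mul_inv_cancel₀ hβ, one_pow]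
  rw [digitSum, sum_range_succ, ← digitSum]
  linear_combination (-(u n : ℝ)) * h

lemma Tb_iterate_eq (hβ : 0 < β) {x : ℝ} (hx : 0 ≤ x) (n : ℕ) :
    (Tb β)^[n] x = β ^ n * (x - digitSum β (dig β x) n) := by
  induction n with
  | zero => simp [digitSum]
  | succ n ih => rw [pow_mul_sub_digitSum_succ hβ.ne', ← ih, dig_eq_sub hβ.le hx]; ring

end BetaExpansion

section Cylinder

variable {β : ℝ} {w : List ℕ}

lemma Tb_iterate_eq_of_mem_cyl (hβ : 0 < β) {x : ℝ} (hx : x ∈ cyl β w) {m : ℕ}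
    (hm : m ≤ w.length) :
    (Tb β)^[m] x = β ^ m * (x - digitSum β (wordSeq w) m) := by
  rw [Tb_iterate_eq hβ hx.1.1, digitSum_congr fun i hi => ?_]
  rw [wordSeq, List.getD_eq_getElem _ _ (by omega), hx.2 i (by omega)]

lemma mem_cyl_of_forall (hβ : 0 < β) {x : ℝ}
    (h : ∀ m ≤ w.length, β ^ m * (x - digitSum β (wordSeq w) m) ∈ Set.Ico (0 : ℝ) 1) :
    x ∈ cyl β w := by
  have hx : x ∈ Set.Ico (0 : ℝ) 1 := by simpa [digitSum] using h 0 (Nat.zero_le _)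
  refine ⟨hx, fun i hi => ?_⟩
  induction i using Nat.strong_induction_on with
  | _ i ih =>
    have hTi : (Tb β)^[i] x = β ^ i * (x - digitSum β (wordSeq w) i) := by
      rw [Tb_iterate_eq hβ hx.1, digitSum_congr fun j hj => ?_]
      rw [wordSeq, List.getD_eq_getElem _ _ (hj.trans hi), ih j hj (hj.trans hi)]
    refine (dig_eq_of_mem_Ico ?_).symm
    have := h (i + 1) hi
    rwa [pow_mul_sub_digitSum_succ hβ.ne', ← hTi, wordSeq, List.getD_eq_getElem _ _ hi] at this

/-- `T^{|w|}` maps `I(w)` into `[0, β^{|w|} (1 - ∑ wᵢ β^{-(i+1)}))`. -/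
lemma not_full_of_pow_mul_one_sub_lt (hβ : 0 < β)
    (h : β ^ w.length * (1 - digitSum β (wordSeq w) w.length) < 1) : ¬ Full β w := by
  set c := β ^ w.length * (1 - digitSum β (wordSeq w) w.length)
  intro hfull
  obtain ⟨x, hx, hxc⟩ : max c 0 ∈ (Tb β)^[w.length] '' cyl β w :=
    hfull ▸ ⟨le_max_right _ _, max_lt h one_pos⟩
  have : (Tb β)^[w.length] x < c := by
    rw [Tb_iterate_eq_of_mem_cyl hβ hx le_rfl]
    exact mul_lt_mul_of_pos_left (by linarith [hx.1.2]) (pow_pos hβ _)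
  linarith [le_max_left c 0]

lemma full_of_forall (hβ : 0 < β)
    (h : ∀ y ∈ Set.Ico (0 : ℝ) 1, ∀ m ≤ w.length, β ^ m *
      (digitSum β (wordSeq w) w.length + β⁻¹ ^ w.length * y - digitSum β (wordSeq w) m)
        ∈ Set.Ico (0 : ℝ) 1) :
    Full β w := by
  refine Set.Subset.antisymm ?_ fun y hy => ?_
  · rintro _ ⟨x, hx, rfl⟩
    exact Tb_iterate_mem_Ico hx.1 _
  · have hx := mem_cyl_of_forall hβ (h y hy)
    refine ⟨_, hx, ?_⟩
    rw [Tb_iterate_eq_of_mem_cyl hβ hx le_rfl, add_sub_cancel_left, ← mul_assoc, ← mul_pow,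
      mul_inv_cancel₀ hβ.ne', one_pow, one_mul]

end Cylinder

section ModifiedExpansion

variable {β : ℝ}

lemma FiniteLen.unique {M N : ℕ} (hM : FiniteLen β M) (hN : FiniteLen β N) : M = N := by
  by_contra hne
  rcases Nat.lt_or_gt_of_ne hne with h | h
  · exact hN.2.1 (hM.2.2 _ (by omega))
  · exact hM.2.1 (hN.2.2 _ (by omega))

/-- Past the last nonzero digit `T` acts as multiplication by `β > 1`, yet stays below `1`. -/
lemma FiniteLen.Tb_iterate_eq_zero (hβ : 1 < β) {M : ℕ} (hM : FiniteLen β M) :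
    (Tb β)^[M] 1 = 0 := by
  have hgrow : ∀ t, (Tb β)^[M + t] 1 = β ^ t * (Tb β)^[M] 1 := by
    intro t
    induction t with
    | zero => simp
    | succ t ih =>
      have h := dig_eq_sub (by linarith : (0 : ℝ) ≤ β) zero_le_one (M + t)
      rw [hM.2.2 (M + t) (by omega), Nat.cast_zero] at h
      rw [pow_succ, ← add_assoc]
      linear_combination ih * β + h
  by_contra hne
  have hpos := (Tb_iterate_nonneg (β := β) zero_le_one M).lt_of_ne' hne
  obtain ⟨t, ht⟩ := pow_unbounded_of_one_lt ((Tb β)^[M] 1)⁻¹ hβ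
  have hlt := (Tb_iterate_mem_Ico_of_ne_zero (β := β) 1 (n := M + t) (by have := hM.1; omega)).2
  rw [hgrow] at hlt
  linarith [(inv_lt_iff_one_lt_mul₀' hpos).1 ht]

lemma FiniteLen.inv_pow_le_Tb_iterate (hβ : 0 < β) {M t : ℕ} (hM : FiniteLen β M)
    (ht : t < M) :
    β⁻¹ ^ (M - t) ≤ (Tb β)^[t] 1 := by
  have hlast : 1 ≤ β * (Tb β)^[M - 1] 1 := by
    have hd : (1 : ℝ) ≤ dig β 1 (M - 1) := Nat.one_le_cast.2 (Nat.one_le_iff_ne_zero.2 hM.2.1)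
    linarith [dig_eq_sub hβ.le zero_le_one (M - 1),
      Tb_iterate_nonneg (β := β) zero_le_one (M - 1 + 1)]
  have hmono := Tb_iterate_add_le hβ.le zero_le_one t (M - 1 - t)
  rw [show t + (M - 1 - t) = M - 1 by omega] at hmono
  rw [show M - t = M - 1 - t + 1 by omega, inv_pow, inv_le_iff_one_le_mul₀' (by positivity),
    pow_succ]
  nlinarith

lemma FiniteLen.inv_pow_sub_le_Tb_iterate_mod (hβ : 1 < β) {M k m : ℕ} (hM : FiniteLen β M)
    (hk : M ∣ k) (hm : m ≤ k) : β⁻¹ ^ (k - m) ≤ (Tb β)^[m % M] 1 := by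
  rcases hm.eq_or_lt with rfl | hlt
  · simp [Nat.mod_eq_zero_of_dvd hk]
  obtain ⟨q, rfl⟩ := hk
  have hq := Nat.mul_le_mul_left M (Nat.div_lt_of_lt_mul hlt)
  have hdiv := Nat.div_add_mod m M
  rw [Nat.mul_succ] at hq
  exact (pow_le_pow_of_le_one (by positivity) (inv_le_one_of_one_le₀ hβ.le) (by omega)).trans
    (hM.inv_pow_le_Tb_iterate (by linarith) (Nat.mod_lt _ hM.1))

open Classical in
lemma modExp_of_finiteLen {M : ℕ} (hM : FiniteLen β M) (i : ℕ) :
    modExp β i = if (i + 1) % M = 0 then dig β 1 (M - 1) - 1 else dig β 1 (i % M) := by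
  have h : ∃ M, FiniteLen β M := ⟨M, hM⟩
  rw [modExp, dif_pos h, (Nat.find_spec h).unique hM]

lemma FiniteLen.pow_mul_one_sub_digitSum_modExp (hβ : 1 < β) {M : ℕ} (hM : FiniteLen β M)
    (m : ℕ) : β ^ m * (1 - digitSum β (modExp β) m) = (Tb β)^[m % M] 1 := by
  have hβ0 : 0 < β := by linarith
  induction m with
  | zero => simp [digitSum]
  | succ m ih =>
    rw [pow_mul_sub_digitSum_succ hβ0.ne', ih, modExp_of_finiteLen hM]
    have hsucc : (m + 1) % M = (m % M + 1) % M := by simp [Nat.add_mod]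
    rcases Nat.lt_or_ge (m % M + 1) M with hlt | hge
    · rw [hsucc, Nat.mod_eq_of_lt hlt, if_neg (Nat.succ_ne_zero _),
        dig_eq_sub hβ0.le zero_le_one]
      ring
    · -- `ε*` restarts here: its digit is `ε_M - 1`, and `T^M 1 = 0`
      have heq : m % M + 1 = M := by have := Nat.mod_lt m hM.1; omega
      have hm : m % M = M - 1 := by omega
      rw [hsucc, heq, Nat.mod_self, if_pos rfl, hm,
        Nat.cast_sub (Nat.one_le_iff_ne_zero.2 hM.2.1), dig_eq_sub hβ0.le zero_le_one,
        Nat.sub_add_cancel hM.1, hM.Tb_iterate_eq_zero hβ]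
      simp

lemma pow_mul_one_sub_digitSum_modExp_of_not_finiteLen (hβ : 1 < β)
    (h : ¬ ∃ M, FiniteLen β M) (m : ℕ) :
    β ^ m * (1 - digitSum β (modExp β) m) = (Tb β)^[m] 1 := by
  have hdig : modExp β = dig β 1 := funext fun i => by rw [modExp, dif_neg h]
  rw [hdig, Tb_iterate_eq (by linarith) zero_le_one]

lemma pow_mul_one_sub_digitSum_modExp_lt_one (hβ : 1 < β) {k : ℕ} (hk : k ≠ 0)
    (h : ¬ ∃ M, FiniteLen β M ∧ M ∣ k) : β ^ k * (1 - digitSum β (modExp β) k) < 1 := by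
  by_cases hfin : ∃ M, FiniteLen β M
  · obtain ⟨M, hM⟩ := hfin
    rw [hM.pow_mul_one_sub_digitSum_modExp hβ]
    exact (Tb_iterate_mem_Ico_of_ne_zero 1 fun h0 => h ⟨M, hM, Nat.dvd_of_mod_eq_zero h0⟩).2
  · rw [pow_mul_one_sub_digitSum_modExp_of_not_finiteLen hβ hfin]
    exact (Tb_iterate_mem_Ico_of_ne_zero 1 hk).2

lemma full_modExp_prefix_of_dvd (hβ : 1 < β) {M k : ℕ} (hM : FiniteLen β M) (hk : M ∣ k) :
    Full β (List.ofFn fun i : Fin k => modExp β i) := by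
  have hβ0 : 0 < β := by linarith
  refine full_of_forall hβ0 fun y hy m hm => ?_
  rw [List.length_ofFn] at hm ⊢
  rw [digitSum_wordSeq_ofFn _ le_rfl, digitSum_wordSeq_ofFn _ hm]
  have hrm := hM.pow_mul_one_sub_digitSum_modExp hβ m
  have hrk := hM.pow_mul_one_sub_digitSum_modExp hβ k
  rw [Nat.mod_eq_zero_of_dvd hk, Function.iterate_zero_apply] at hrk
  have key : β ^ m * (digitSum β (modExp β) k + β⁻¹ ^ k * y - digitSum β (modExp β) m)
      = (Tb β)^[m % M] 1 - β⁻¹ ^ (k - m) * (1 - y) := by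
    have hsplit : β ^ k = β ^ m * β ^ (k - m) := by rw [← pow_add, Nat.add_sub_cancel' hm]
    rw [hsplit] at hrk
    rw [← hrm, inv_pow, inv_pow, hsplit]
    field_simp
    linear_combination -hrk
  have hpos : 0 < β⁻¹ ^ (k - m) * (1 - y) := mul_pos (by positivity) (by linarith [hy.2])
  rw [key]
  constructor
  · nlinarith [hM.inv_pow_sub_le_Tb_iterate_mod hβ hk hm, hy.1,
      mul_nonneg (pow_nonneg (inv_nonneg.2 hβ0.le) (k - m)) hy.1]
  · linarith [Tb_iterate_one_le_one (β := β) (m % M)]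

end ModifiedExpansion

/-- ε*(1,β)|_k is full iff ε(1,β) is finite with length M and M ∣ k. -/
theorem stmt7 (β : ℝ) (hβ : 1 < β) (k : ℕ) (hk : 1 ≤ k) :
    Full β (List.ofFn (fun i : Fin k => modExp β i)) ↔
      ∃ M, FiniteLen β M ∧ M ∣ k := by
  refine ⟨fun hfull => ?_, fun ⟨M, hM, hd⟩ => full_modExp_prefix_of_dvd hβ hM hd⟩
  by_contra h
  refine not_full_of_pow_mul_one_sub_lt (by linarith) ?_ hfull
  rw [List.length_ofFn, digitSum_wordSeq_ofFn _ le_rfl]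
  exact pow_mul_one_sub_digitSum_modExp_lt_one hβ (by omega) h
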